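/- If n and m are perpendicular unit vectors in ℝ³ and a, b are real, then the trace of exp(i a n·σ)·exp(i b m·σ) equals 2·cos(a)·cos(b). -/

import Mathlib

open Matrix Complex NormedSpace

noncomputable def σx : Matrix (Fin 2) (Fin 2) ℂ := !![0, 1; 1, 0]
noncomputable def σy : Matrix (Fin 2) (Fin 2) ℂ := !![0, -I; I, 0]
noncomputable def σz : Matrix (Fin 2) (Fin 2) ℂ := !![1, 0; 0, -1]

/-- n·σ for a real vector n. -/
noncomputable def pauli (n : Fin 3 → ℝ) : Matrix (Fin 2) (Fin 2) ℂ :=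
  (n 0 : ℂ) • σx + (n 1 : ℂ) • σy + (n 2 : ℂ) • σz

lemma pauli_sq (n : Fin 3 → ℝ) (hn : n 0 ^ 2 + n 1 ^ 2 + n 2 ^ 2 = 1) :
    pauli n ^ 2 = 1 := by
  have hC : (n 0 : ℂ) ^ 2 + (n 1 : ℂ) ^ 2 + (n 2 : ℂ) ^ 2 = 1 := by
    exact_mod_cast congrArg (fun x : ℝ => (x : ℂ)) hn
  rw [pow_two]
  ext i j
  fin_cases i <;> fin_cases j <;>
    simp [pauli, σx, σy, σz, Matrix.mul_apply, Fin.sum_univ_two, Matrix.one_apply] <;>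
    first
    | linear_combination hC - (n 1 : ℂ)^2 * Complex.I_sq
    | ring

set_option maxHeartbeats 1000000 in
lemma exp_I_smul (M : Matrix (Fin 2) (Fin 2) ℂ) (h : M ^ 2 = 1) (a : ℝ) :
    exp ((I * (a : ℂ)) • M) =
      (Real.cos a : ℂ) • (1 : Matrix (Fin 2) (Fin 2) ℂ) + ((Real.sin a : ℂ) * I) • M := by
  letI : SeminormedRing (Matrix (Fin 2) (Fin 2) ℂ) := Matrix.linftyOpSemiNormedRing
  letI : NormedRing (Matrix (Fin 2) (Fin 2) ℂ) := Matrix.linftyOpNormedRing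
  letI : NormedAlgebra ℂ (Matrix (Fin 2) (Fin 2) ℂ) := Matrix.linftyOpNormedAlgebra
  have hs := NormedSpace.exp_series_hasSum_exp' (𝕂 := ℂ) ((I * (a : ℂ)) • M)
  have heven : HasSum (fun k : ℕ => ((((2 * k).factorial : ℕ) : ℂ)⁻¹ • ((I * (a : ℂ)) • M) ^ (2 * k)))
      ((Real.cos a : ℂ) • (1 : Matrix (Fin 2) (Fin 2) ℂ)) := by
    have h1 := (Complex.hasSum_cos' (a : ℂ)).smul_const (1 : Matrix (Fin 2) (Fin 2) ℂ)
    rw [← Complex.ofReal_cos] at h1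
    convert h1 using 2 with k
    rw [smul_pow, pow_mul M, h, one_pow, smul_smul]
    congr 1
    rw [mul_comm I (a : ℂ), inv_mul_eq_div]
  have hodd : HasSum (fun k : ℕ => ((((2 * k + 1).factorial : ℕ) : ℂ)⁻¹ • ((I * (a : ℂ)) • M) ^ (2 * k + 1)))
      (((Real.sin a : ℂ) * I) • M) := by
    have h1 := ((Complex.hasSum_sin' (a : ℂ)).mul_right I).smul_const M
    simp only [div_mul_cancel₀ _ Complex.I_ne_zero] at h1
    rw [← Complex.ofReal_sin] at h1
    convert h1 using 2 with k
    rw [smul_pow, pow_succ M, pow_mul M, h, one_pow, one_mul, smul_smul]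
    congr 1
    rw [mul_comm I (a : ℂ), inv_mul_eq_div]
  exact hs.unique (heven.even_add_odd hodd)

lemma trace_pauli (n : Fin 3 → ℝ) : (pauli n).trace = 0 := by
  simp [pauli, σx, σy, σz, Matrix.trace, Matrix.diag, Fin.sum_univ_two]

lemma trace_pauli_mul (n m : Fin 3 → ℝ)
    (hperp : n 0 * m 0 + n 1 * m 1 + n 2 * m 2 = 0) :
    (pauli n * pauli m).trace = 0 := by
  have hC : (n 0 : ℂ) * (m 0 : ℂ) + (n 1 : ℂ) * (m 1 : ℂ) + (n 2 : ℂ) * (m 2 : ℂ) = 0 := by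
    exact_mod_cast congrArg (fun x : ℝ => (x : ℂ)) hperp
  simp [pauli, σx, σy, σz, Matrix.trace, Matrix.diag, Matrix.mul_apply, Fin.sum_univ_two]
  linear_combination 2 * hC - 2 * (n 1 : ℂ) * (m 1 : ℂ) * Complex.I_sq

theorem stmt3 (n m : Fin 3 → ℝ)
    (hn : n 0 ^ 2 + n 1 ^ 2 + n 2 ^ 2 = 1) (hm : m 0 ^ 2 + m 1 ^ 2 + m 2 ^ 2 = 1)
    (hperp : n 0 * m 0 + n 1 * m 1 + n 2 * m 2 = 0) (a b : ℝ) :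
    (exp ((I * a) • pauli n) * exp ((I * b) • pauli m)).trace =
      2 * Real.cos a * Real.cos b := by
  rw [exp_I_smul _ (pauli_sq n hn) a, exp_I_smul _ (pauli_sq m hm) b]
  simp only [add_mul, mul_add, smul_mul_assoc, mul_smul_comm, one_mul, mul_one, smul_smul,
    Matrix.trace_add, Matrix.trace_smul, Matrix.trace_one, trace_pauli, trace_pauli_mul n m hperp,
    smul_eq_mul, Fintype.card_fin]
  push_cast
  ring
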